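/- arXiv:2309.15193 — 2 statements merged into one kernel-verified Lean document; each statement's English description precedes it below -/
import Mathlib

section
/- With the setup of the normalized pseudo-Boolean amplitude function (c_0 chosen so that ∑_{x ∈ {0,1}^m} e^{2f(x)} = 2^m), for any fixed index n ∈ {1,…,m}: ∑_{x ∈ {0,1}^m, y_n(x)=1} e^{2f(x)} = (e^{2c_n}/(1+e^{2c_n}))·2^m and ∑_{x ∈ {0,1}^m, y_n(x)=0} e^{2f(x)} = (1/(1+e^{2c_n}))·2^m. -/
open Finset Real

/-- The Gray-code-like map: `y n = x n + x (n+1) (mod 2)` for `n < m-1`, `y (m-1) = x (m-1)`. -/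
def yFun (m : ℕ) (x : Fin m → ZMod 2) (n : Fin m) : ZMod 2 :=
  if h : (n : ℕ) + 1 < m then x n + x ⟨(n : ℕ) + 1, h⟩ else x n

/-- The amplitude pseudo-Boolean function `f(x) = ∑ c_n y_n(x) + c_0`. -/
noncomputable def fAmp (m : ℕ) (c : Fin m → ℝ) (c0 : ℝ) (x : Fin m → ZMod 2) : ℝ :=
  (∑ n : Fin m, c n * ((yFun m x n).val : ℝ)) + c0


/-- The normalization constant `c_0`. -/
noncomputable def c0def (m : ℕ) (c : Fin m → ℝ) : ℝ :=
  -(1 / 2) * ∑ n : Fin m, Real.log ((1 + Real.exp (2 * c n)) / 2)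

/-- Inverse of `yFun`: `x n = ∑_{k ≥ n} y k`. -/
def xInv (m : ℕ) (y : Fin m → ZMod 2) (n : Fin m) : ZMod 2 :=
  ∑ k ∈ Finset.univ.filter (fun k => n ≤ k), y k

lemma zmod2_add_self (a : ZMod 2) : a + a = 0 := by revert a; decide

lemma zmod2_eq_zero_iff (a : ZMod 2) : a = 0 ↔ ¬ a = 1 := by revert a; decide

lemma yFun_xInv (m : ℕ) (y : Fin m → ZMod 2) : yFun m (xInv m y) = y := by
  funext n
  unfold yFun
  split
  · next h =>
    have hset : Finset.univ.filter (fun k => n ≤ k)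
        = insert n (Finset.univ.filter (fun k => (⟨(n : ℕ) + 1, h⟩ : Fin m) ≤ k)) := by
      ext k
      simp only [Finset.mem_filter, Finset.mem_univ, true_and, Finset.mem_insert,
        Fin.le_def, Fin.ext_iff]
      omega
    have hn : n ∉ Finset.univ.filter (fun k => (⟨(n : ℕ) + 1, h⟩ : Fin m) ≤ k) := by
      simp [Fin.le_def]
    show xInv m y n + xInv m y ⟨(n : ℕ) + 1, h⟩ = y n
    simp only [xInv]
    rw [hset, Finset.sum_insert hn, add_assoc, zmod2_add_self, add_zero]
  · next h =>
    show xInv m y n = y n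
    have hset : Finset.univ.filter (fun k => n ≤ k) = {n} := by
      ext k
      have := k.isLt
      simp only [Finset.mem_filter, Finset.mem_univ, true_and, Finset.mem_singleton,
        Fin.le_def, Fin.ext_iff]
      omega
    simp only [xInv]
    rw [hset, Finset.sum_singleton]

lemma yFun_bijective (m : ℕ) : Function.Bijective (yFun m) :=
  Finite.surjective_iff_bijective.mp (fun y => ⟨xInv m y, yFun_xInv m y⟩)

lemma zmod2_sum (F : ZMod 2 → ℝ) : ∑ v : ZMod 2, F v = F 0 + F 1 := by
  have h : (Finset.univ : Finset (ZMod 2)) = {0, 1} := by decide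
  rw [h, Finset.sum_pair (by decide : (0 : ZMod 2) ≠ 1)]

lemma total_sum (m : ℕ) (c : Fin m → ℝ) :
    (∑ y : Fin m → ZMod 2,
        Real.exp (2 * ((∑ k, c k * ((y k).val : ℝ)) + c0def m c))) = 2 ^ m := by
  have hpos : ∀ k : Fin m, (0 : ℝ) < 1 + Real.exp (2 * c k) := fun k => by positivity
  have h1 : ∀ y : Fin m → ZMod 2,
      Real.exp (2 * ((∑ k, c k * ((y k).val : ℝ)) + c0def m c))
        = Real.exp (2 * c0def m c) * ∏ k, Real.exp (2 * (c k * ((y k).val : ℝ))) := by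
    intro y
    rw [← Real.exp_sum, ← Real.exp_add]
    congr 1
    rw [← Finset.mul_sum]
    ring
  simp only [h1]
  rw [← Finset.mul_sum]
  have h2 : (∑ y : Fin m → ZMod 2, ∏ k, Real.exp (2 * (c k * ((y k).val : ℝ))))
      = ∏ k, (1 + Real.exp (2 * c k)) := by
    have h2' := Finset.prod_univ_sum (fun _ : Fin m => (Finset.univ : Finset (ZMod 2)))
      (fun k v => Real.exp (2 * (c k * (v.val : ℝ))))
    rw [Fintype.piFinset_univ] at h2'
    rw [← h2']
    refine Finset.prod_congr rfl fun k _ => ?_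
    rw [zmod2_sum]
    norm_num [ZMod.val_one]
  rw [h2]
  have h3 : Real.exp (2 * c0def m c) = ∏ k, 2 / (1 + Real.exp (2 * c k)) := by
    have : 2 * c0def m c = -∑ k, Real.log ((1 + Real.exp (2 * c k)) / 2) := by
      rw [c0def]; ring
    rw [this, Real.exp_neg, Real.exp_sum]
    rw [← Finset.prod_inv_distrib]
    refine Finset.prod_congr rfl fun k _ => ?_
    rw [Real.exp_log (by positivity)]
    field_simp
  rw [h3, ← Finset.prod_mul_distrib]
  have h4 : ∀ k : Fin m, 2 / (1 + Real.exp (2 * c k)) * (1 + Real.exp (2 * c k)) = 2 :=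
    fun k => div_mul_cancel₀ 2 (ne_of_gt (hpos k))
  simp only [h4]
  simp [Finset.prod_const]

lemma slice_rel (m : ℕ) (c : Fin m → ℝ) (n : Fin m) :
    (∑ y ∈ Finset.univ.filter (fun y : Fin m → ZMod 2 => y n = 1),
        Real.exp (2 * ((∑ k, c k * ((y k).val : ℝ)) + c0def m c)))
      = Real.exp (2 * c n) *
        ∑ y ∈ Finset.univ.filter (fun y : Fin m → ZMod 2 => y n = 0),
          Real.exp (2 * ((∑ k, c k * ((y k).val : ℝ)) + c0def m c)) := by
  rw [Finset.mul_sum]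
  refine Finset.sum_nbij' (fun y => Function.update y n 0) (fun y => Function.update y n 1)
    ?_ ?_ ?_ ?_ ?_
  · intro y hy; simp
  · intro y hy; simp
  · intro y hy
    simp only [Finset.mem_filter, Finset.mem_univ, true_and] at hy
    show Function.update (Function.update y n 0) n 1 = y
    rw [Function.update_idem, ← hy, Function.update_eq_self]
  · intro y hy
    simp only [Finset.mem_filter, Finset.mem_univ, true_and] at hy
    show Function.update (Function.update y n 1) n 0 = y
    rw [Function.update_idem, ← hy, Function.update_eq_self]
  · intro y hy
    simp only [Finset.mem_filter, Finset.mem_univ, true_and] at hy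
    rw [← Real.exp_add]
    congr 1
    have hmem : n ∈ (Finset.univ : Finset (Fin m)) := Finset.mem_univ n
    rw [Finset.sum_eq_sum_sdiff_singleton_add hmem
        (fun k => c k * ((y k).val : ℝ)),
      Finset.sum_eq_sum_sdiff_singleton_add hmem
        (fun k => c k * (((Function.update y n 0 : Fin m → ZMod 2) k).val : ℝ))]
    have hdiff : ∑ k ∈ Finset.univ \ {n}, c k * ((y k).val : ℝ)
        = ∑ k ∈ Finset.univ \ {n},
            c k * (((Function.update y n 0 : Fin m → ZMod 2) k).val : ℝ) := by
      refine Finset.sum_congr rfl fun k hk => ?_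
      rw [Finset.mem_sdiff, Finset.mem_singleton] at hk
      rw [Function.update_of_ne hk.2]
    rw [← hdiff, hy]
    simp [ZMod.val_one]
    ring
  
lemma transfer (m : ℕ) (c : Fin m → ℝ) (n : Fin m) (p : ZMod 2) :
    (∑ x ∈ Finset.univ.filter (fun x : Fin m → ZMod 2 => yFun m x n = p),
        Real.exp (2 * fAmp m c (c0def m c) x))
      = ∑ y ∈ Finset.univ.filter (fun y : Fin m → ZMod 2 => y n = p),
          Real.exp (2 * ((∑ k, c k * ((y k).val : ℝ)) + c0def m c)) := by
  refine Finset.sum_bijective (yFun m) (yFun_bijective m) (fun x => ?_) (fun x _ => rfl)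
  simp

theorem slice_sum_exp (m : ℕ) (hm : 1 ≤ m) (c : Fin m → ℝ) (n : Fin m) :
    (∑ x ∈ Finset.univ.filter (fun x : Fin m → ZMod 2 => yFun m x n = 1),
        Real.exp (2 * fAmp m c (c0def m c) x))
      = Real.exp (2 * c n) / (1 + Real.exp (2 * c n)) * 2 ^ m ∧
    (∑ x ∈ Finset.univ.filter (fun x : Fin m → ZMod 2 => yFun m x n = 0),
        Real.exp (2 * fAmp m c (c0def m c) x))
      = 1 / (1 + Real.exp (2 * c n)) * 2 ^ m := by
  have hpos : (0 : ℝ) < 1 + Real.exp (2 * c n) := by positivity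
  have hne : (1 : ℝ) + Real.exp (2 * c n) ≠ 0 := ne_of_gt hpos
  rw [transfer, transfer]
  set S0 := ∑ y ∈ Finset.univ.filter (fun y : Fin m → ZMod 2 => y n = 0),
      Real.exp (2 * ((∑ k, c k * ((y k).val : ℝ)) + c0def m c)) with hS0
  set S1 := ∑ y ∈ Finset.univ.filter (fun y : Fin m → ZMod 2 => y n = 1),
      Real.exp (2 * ((∑ k, c k * ((y k).val : ℝ)) + c0def m c)) with hS1
  have hrel : S1 = Real.exp (2 * c n) * S0 := slice_rel m c n
  have htot : S1 + S0 = 2 ^ m := by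
    rw [hS0, hS1]
    have hfilt : Finset.univ.filter (fun y : Fin m → ZMod 2 => y n = 0)
        = Finset.univ.filter (fun y : Fin m → ZMod 2 => ¬ y n = 1) := by
      apply Finset.filter_congr
      intro y _
      exact zmod2_eq_zero_iff (y n)
    rw [hfilt, Finset.sum_filter_add_sum_filter_not]
    exact total_sum m c
  have hS0val : S0 = 1 / (1 + Real.exp (2 * c n)) * 2 ^ m := by
    rw [hrel] at htot
    field_simp
    linarith
  constructor
  · rw [hrel, hS0val]; ring
  · exact hS0val
end

section
/- Let K be odd, σ > 0, p(d) = 1 − Φ(−d/σ), φ⁺(d) = ∑_{k=0}^{(K−1)/2} C(K,k) p(d)^{K−k}(1−p(d))^k, φ⁻(d) = ∑_{k=0}^{(K−1)/2} C(K,k) p(d)^k (1−p(d))^{K−k}. Then the function d ↦ (φ⁺(d) − φ⁻(d))·d is nonnegative on ℝ, equals 0 only at d = 0, is monotone increasing for d > 0 and monotone decreasing for d < 0, with global minimum 0 at d = 0; moreover (φ⁺(d) − φ⁻(d)) → 1 as d → +∞ and → −1 as d → −∞, so (φ⁺(d) − φ⁻(d))·d → +∞ as |d| → ∞. Consequently,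 for any c > 0 there exists γ > 0 such that (φ⁺(d) − φ⁻(d))·d > c whenever |d| > γ. -/
open Finset Filter MeasureTheory ProbabilityTheory

/-- The standard normal CDF. -/
noncomputable def stdNormCDF : ℝ → ℝ := fun x => cdf (gaussianReal 0 1) x

/-- Probability that a single sensor votes `+1` when the position error is `d`. -/
noncomputable def pOf (σ d : ℝ) : ℝ := 1 - stdNormCDF (-d / σ)

/-- Probability that the `K`-sensor majority vote is `+1`. -/
noncomputable def phiPlus (K : ℕ) (σ d : ℝ) : ℝ :=
  ∑ k ∈ Finset.range ((K - 1) / 2 + 1),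
    (K.choose k : ℝ) * pOf σ d ^ (K - k) * (1 - pOf σ d) ^ k

/-- Probability that the `K`-sensor majority vote is `−1`. -/
noncomputable def phiMinus (K : ℕ) (σ d : ℝ) : ℝ :=
  ∑ k ∈ Finset.range ((K - 1) / 2 + 1),
    (K.choose k : ℝ) * pOf σ d ^ k * (1 - pOf σ d) ^ (K - k)

/-- The drift function `g(d) = (φ⁺(d) − φ⁻(d))·d`. -/
noncomputable def gFun (K : ℕ) (σ d : ℝ) : ℝ := (phiPlus K σ d - phiMinus K σ d) * d

-- basic gaussian cdf facts
lemma stdNormCDF_mono : Monotone stdNormCDF := monotone_cdf _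

lemma gauss_pos_Ioc {a b : ℝ} (hab : a < b) : 0 < gaussianReal 0 1 (Set.Ioc a b) := by
  by_contra h
  push_neg at h
  have h0 : gaussianReal 0 1 (Set.Ioc a b) = 0 := le_antisymm h zero_le
  have := gaussianReal_absolutelyContinuous' (0:ℝ) (v := 1) one_ne_zero h0
  rw [Real.volume_Ioc] at this
  simp only [ENNReal.ofReal_eq_zero, sub_nonpos] at this
  linarith

lemma stdNormCDF_strictMono : StrictMono stdNormCDF := by
  intro a b hab
  rcases lt_or_ge (stdNormCDF a) (stdNormCDF b) with h | h
  · exact h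
  have hm := stdNormCDF_mono hab.le
  have heq : stdNormCDF a = stdNormCDF b := le_antisymm hm h
  exfalso
  have h1 : (gaussianReal 0 1) (Set.Iic a) = (gaussianReal 0 1) (Set.Iic b) := by
    have := congrArg ENNReal.ofReal heq
    unfold stdNormCDF at this
    rwa [ofReal_cdf, ofReal_cdf] at this
  have h2 : (gaussianReal 0 1) (Set.Ioc a b) = 0 := by
    have : Set.Iic b = Set.Iic a ∪ Set.Ioc a b := (Set.Iic_union_Ioc_eq_Iic hab.le).symm
    rw [this, measure_union (Set.Iic_disjoint_Ioc le_rfl) measurableSet_Ioc] at h1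
    have hfin : (gaussianReal 0 1) (Set.Iic a) ≠ ⊤ := measure_ne_top _ _
    nth_rewrite 1 [← add_zero ((gaussianReal 0 1) (Set.Iic a))] at h1
    exact ((ENNReal.add_right_inj hfin).mp h1).symm
  exact absurd h2 (gauss_pos_Ioc hab).ne'

lemma stdNormCDF_lt_one (x : ℝ) : stdNormCDF x < 1 := by
  rcases lt_or_ge (stdNormCDF x) 1 with h | h
  · exact h
  exfalso
  have h1 : stdNormCDF x = 1 := le_antisymm (cdf_le_one _ _) h
  have h2 : (gaussianReal 0 1) (Set.Iic x) = 1 := by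
    have := congrArg ENNReal.ofReal h1
    unfold stdNormCDF at this
    rwa [ofReal_cdf, ENNReal.ofReal_one] at this
  have h3 : (gaussianReal 0 1) (Set.Ioi x) = 0 := by
    have := prob_compl_eq_one_sub (μ := gaussianReal 0 1) (measurableSet_Iic (a := x))
    rw [h2, Set.compl_Iic] at this
    simpa using this
  have h4 : (gaussianReal 0 1) (Set.Ioc x (x+1)) = 0 :=
    measure_mono_null Set.Ioc_subset_Ioi_self h3
  exact absurd h4 (gauss_pos_Ioc (by linarith)).ne'

lemma stdNormCDF_pos (x : ℝ) : 0 < stdNormCDF x := by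
  rcases lt_or_ge 0 (stdNormCDF x) with h | h
  · exact h
  exfalso
  have h1 : stdNormCDF x = 0 := le_antisymm h (cdf_nonneg _ _)
  have h2 : (gaussianReal 0 1) (Set.Iic x) = 0 := by
    have := congrArg ENNReal.ofReal h1
    unfold stdNormCDF at this
    rwa [ofReal_cdf, ENNReal.ofReal_zero] at this
  have h4 : (gaussianReal 0 1) (Set.Ioc (x-1) x) = 0 :=
    measure_mono_null Set.Ioc_subset_Iic_self h2
  exact absurd h4 (gauss_pos_Ioc (by linarith)).ne'

lemma stdNormCDF_zero : stdNormCDF 0 = 1/2 := by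
  have hmap : (gaussianReal 0 1).map (fun y => (-1 : ℝ) * y) = gaussianReal 0 1 := by
    rw [gaussianReal_map_const_mul (-1 : ℝ)]
    congr 1
    · norm_num
    · ext
      norm_num
  have hsymm : (gaussianReal 0 1) (Set.Iic (0:ℝ)) = (gaussianReal 0 1) (Set.Ici (0:ℝ)) := by
    conv_lhs => rw [← hmap]
    rw [Measure.map_apply (by fun_prop) measurableSet_Iic]
    congr 1
    ext y
    simp
  have hsing : (gaussianReal 0 1) ({0} : Set ℝ) = 0 := by
    apply gaussianReal_absolutelyContinuous (0:ℝ) (v := 1) one_ne_zero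
    simp
  have hunion : (gaussianReal 0 1) (Set.Iic (0:ℝ)) + (gaussianReal 0 1) (Set.Ici (0:ℝ))
      = 1 + (gaussianReal 0 1) ({0} : Set ℝ) := by
    have := measure_union_add_inter (μ := gaussianReal 0 1) (t := Set.Ici (0:ℝ)) (Set.Iic (0:ℝ)) measurableSet_Ici
    rw [Set.Iic_union_Ici, Set.Iic_inter_Ici] at this
    simpa using this.symm
  rw [hsing, add_zero, ← hsymm] at hunion
  have h2 : (gaussianReal 0 1) (Set.Iic (0:ℝ)) = 1/2 := by
    have h2' : 2 * (gaussianReal 0 1) (Set.Iic (0:ℝ)) = 1 := by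
      rw [two_mul]; exact hunion
    exact (ENNReal.eq_div_iff (by norm_num) (by norm_num)).mpr h2'
  unfold stdNormCDF
  rw [cdf_eq_real, measureReal_def, h2]
  simp [ENNReal.toReal_div]


lemma sum_split (K N : ℕ) (hK : K = 2*N+1) (x : ℝ) :
    (∑ k ∈ Finset.range (N+1), (K.choose k : ℝ) * x^(K-k) * (1-x)^k)
    + (∑ k ∈ Finset.range (N+1), (K.choose k : ℝ) * x^k * (1-x)^(K-k)) = 1 := by
  set f : ℕ → ℝ := fun j => x^j * (1-x)^(K-j) * (K.choose j : ℝ) with hf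
  have h1 : (1:ℝ) = ∑ j ∈ Finset.range (K+1), f j := by
    have := add_pow x (1-x) K
    simp only [add_sub_cancel, one_pow] at this
    exact this
  have hsplit : ∑ j ∈ Finset.range (K+1), f j
      = (∑ j ∈ Finset.range (N+1), f j) + ∑ i ∈ Finset.range (N+1), f (N+1+i) := by
    have hK1 : K + 1 = (N+1)+(N+1) := by omega
    rw [hK1, Finset.sum_range_add]
  have hrefl : ∑ i ∈ Finset.range (N+1), f (N+1+i)
      = ∑ k ∈ Finset.range (N+1), f (K - k) := by
    rw [← Finset.sum_range_reflect (fun i => f (N+1+i)) (N+1)]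
    apply Finset.sum_congr rfl
    intro k hk
    simp only [Finset.mem_range] at hk
    congr 1
    omega
  have hterm : ∀ k ∈ Finset.range (N+1),
      f (K - k) = (K.choose k : ℝ) * x^(K-k) * (1-x)^k := by
    intro k hk
    simp only [Finset.mem_range] at hk
    have hkK : k ≤ K := by omega
    simp only [hf]
    rw [Nat.choose_symm hkK]
    have : K - (K - k) = k := by omega
    rw [this]
    ring
  have hterm2 : ∀ k ∈ Finset.range (N+1),
      f k = (K.choose k : ℝ) * x^k * (1-x)^(K-k) := by
    intro k _; simp only [hf]; ring
  rw [hsplit, hrefl, Finset.sum_congr rfl hterm, Finset.sum_congr rfl hterm2] at h1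
  rw [add_comm]
  exact h1.symm

noncomputable def Bfun (K : ℕ) (x : ℝ) : ℝ :=
  ∑ k ∈ Finset.range ((K - 1) / 2 + 1), (K.choose k : ℝ) * x ^ (K - k) * (1 - x) ^ k

lemma Bfun_hasDerivAt (K N : ℕ) (hK : K = 2*N+1) (x : ℝ) :
    HasDerivAt (Bfun K) (((N:ℝ)+1) * (K.choose (N+1) : ℝ) * (x*(1-x))^N) x := by
  have hrange : (K-1)/2 = N := by omega
  set u : ℕ → ℝ := fun k => (k:ℝ) * (K.choose k : ℝ) * x^(K-k) * (1-x)^(k-1) with hu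
  have hterm : ∀ k ∈ Finset.range (N+1),
      HasDerivAt (fun y => (K.choose k : ℝ) * y ^ (K - k) * (1 - y) ^ k)
        (u (k+1) - u k) x := by
    intro k hk
    simp only [Finset.mem_range] at hk
    have hkK : k + 1 ≤ K := by omega
    have h1 : HasDerivAt (fun y : ℝ => y^(K-k)) (((K-k : ℕ):ℝ) * x^(K-k-1)) x :=
      hasDerivAt_pow (K-k) x
    have h2 : HasDerivAt (fun y : ℝ => (1-y)^k) ((k:ℝ) * (1-x)^(k-1) * (-1)) x :=
      ((hasDerivAt_id x).const_sub 1).pow k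
    have h3 := (h1.mul h2).const_mul ((K.choose k : ℝ))
    have key : (K.choose k : ℝ) * (((K-k : ℕ):ℝ) * x^(K-k-1) * (1-x)^k
        + x^(K-k) * ((k:ℝ) * (1-x)^(k-1) * (-1))) = u (k+1) - u k := by
      have e1 : K - k - 1 = K - (k+1) := by omega
      have e3 : ((K.choose (k+1)) : ℝ) * ((k:ℝ)+1) = (K.choose k : ℝ) * ((K-k : ℕ):ℝ) := by
        exact_mod_cast congrArg (Nat.cast : ℕ → ℝ) (Nat.choose_succ_right_eq K k)
      have e4 : K - k = (K - (k+1)) + 1 := by omega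
      have e5 : ((K - k : ℕ):ℝ) = ((K-(k+1) : ℕ):ℝ) + 1 := by
        exact_mod_cast congrArg (Nat.cast : ℕ → ℝ) e4
      rw [e5] at e3
      simp only [hu, e5, e1, Nat.add_sub_cancel, e4]
      push_cast
      linear_combination (-(x^(K-(k+1)) * (1-x)^k)) * e3
    have h4 : (fun y => (K.choose k : ℝ) * y ^ (K - k) * (1 - y) ^ k)
        = (fun y => (K.choose k : ℝ) * (y ^ (K - k) * (1 - y) ^ k)) := by
      funext y; ring
    rw [h4, ← key]
    exact h3
  have hsum := HasDerivAt.fun_sum hterm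
  have hBeq : Bfun K = fun y => ∑ k ∈ Finset.range (N+1),
      (K.choose k : ℝ) * y ^ (K - k) * (1 - y) ^ k := by
    funext y; simp [Bfun, hrange]
  have htel : ∑ k ∈ Finset.range (N+1), (u (k+1) - u k) = u (N+1) - u 0 :=
    Finset.sum_range_sub u (N+1)
  have hu0 : u 0 = 0 := by simp [hu]
  have huN : u (N+1) = ((N:ℝ)+1) * (K.choose (N+1) : ℝ) * (x*(1-x))^N := by
    have e5 : K - (N+1) = N := by omega
    simp only [hu, e5, Nat.add_sub_cancel]
    push_cast
    rw [mul_pow]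
    ring
  rw [hBeq]
  rw [htel, hu0, sub_zero, huN] at hsum
  exact hsum

lemma Bfun_choose_pos (K N : ℕ) (hK : K = 2*N+1) : (0:ℝ) < (K.choose (N+1) : ℝ) := by
  exact_mod_cast Nat.choose_pos (by omega)

lemma Bfun_strictMonoOn (K N : ℕ) (hK : K = 2*N+1) :
    StrictMonoOn (Bfun K) (Set.Icc 0 1) := by
  apply strictMonoOn_of_deriv_pos (convex_Icc 0 1)
  · exact Continuous.continuousOn (continuous_iff_continuousAt.mpr fun x =>
      (Bfun_hasDerivAt K N hK x).differentiableAt.continuousAt)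
  · intro x hx
    rw [interior_Icc] at hx
    rw [(Bfun_hasDerivAt K N hK x).deriv]
    have h1 : (0:ℝ) < x * (1-x) := mul_pos hx.1 (by linarith [hx.2])
    have := Bfun_choose_pos K N hK
    positivity

lemma Bfun_continuous (K N : ℕ) (hK : K = 2*N+1) : Continuous (Bfun K) :=
  continuous_iff_continuousAt.mpr fun x =>
    (Bfun_hasDerivAt K N hK x).differentiableAt.continuousAt

lemma Bfun_one (K N : ℕ) (hK : K = 2*N+1) : Bfun K 1 = 1 := by
  have hrange : (K-1)/2 = N := by omega
  unfold Bfun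
  rw [hrange, Finset.sum_eq_single 0]
  · simp
  · intro k _ hk
    simp [zero_pow hk]
  · simp

lemma Bfun_zero (K N : ℕ) (hK : K = 2*N+1) : Bfun K 0 = 0 := by
  have hrange : (K-1)/2 = N := by omega
  unfold Bfun
  rw [hrange]
  apply Finset.sum_eq_zero
  intro k hk
  simp only [Finset.mem_range] at hk
  have : K - k ≠ 0 := by omega
  simp [zero_pow this]

lemma Bfun_half (K N : ℕ) (hK : K = 2*N+1) : Bfun K (1/2 : ℝ) = 1/2 := by
  have hrange : (K-1)/2 = N := by omega
  have hsplit := sum_split K N hK (1/2 : ℝ)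
  have heq : (∑ k ∈ Finset.range (N+1), (K.choose k : ℝ) * (1/2:ℝ)^(K-k) * (1-1/2)^k)
      = ∑ k ∈ Finset.range (N+1), (K.choose k : ℝ) * (1/2:ℝ)^k * (1-1/2)^(K-k) := by
    apply Finset.sum_congr rfl
    intro k hk
    norm_num
    ring
  have hB : Bfun K (1/2:ℝ) = ∑ k ∈ Finset.range (N+1),
      (K.choose k : ℝ) * (1/2:ℝ)^(K-k) * (1-1/2)^k := by
    unfold Bfun; rw [hrange]
  rw [← heq] at hsplit
  rw [hB]
  linarith





lemma pOf_mem (σ d : ℝ) : pOf σ d ∈ Set.Icc (0:ℝ) 1 := by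
  constructor
  · have := stdNormCDF_lt_one (-d/σ); unfold pOf; linarith
  · have := stdNormCDF_pos (-d/σ); unfold pOf; linarith

lemma pOf_strictMono {σ : ℝ} (hσ : 0 < σ) : StrictMono (pOf σ) := by
  intro a b hab
  unfold pOf
  have hba : -b < -a := by linarith
  have h1 : -b/σ < -a/σ := by gcongr
  have := stdNormCDF_strictMono h1
  linarith

lemma pOf_zero (σ : ℝ) : pOf σ 0 = 1/2 := by
  unfold pOf
  rw [neg_zero, zero_div, stdNormCDF_zero]
  norm_num

lemma tendsto_stdNormCDF_atTop : Tendsto stdNormCDF atTop (nhds 1) := tendsto_cdf_atTop _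
lemma tendsto_stdNormCDF_atBot : Tendsto stdNormCDF atBot (nhds 0) := tendsto_cdf_atBot _

lemma pOf_tendsto_atTop {σ : ℝ} (hσ : 0 < σ) : Tendsto (pOf σ) atTop (nhds 1) := by
  have h1 : Tendsto (fun d : ℝ => -d/σ) atTop atBot := by
    apply Tendsto.atBot_div_const hσ
    exact tendsto_neg_atTop_atBot
  have h2 := tendsto_stdNormCDF_atBot.comp h1
  have h3 : Tendsto (fun d => 1 - stdNormCDF (-d/σ)) atTop (nhds (1 - 0)) :=
    tendsto_const_nhds.sub h2
  unfold pOf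
  simpa using h3

lemma pOf_tendsto_atBot {σ : ℝ} (hσ : 0 < σ) : Tendsto (pOf σ) atBot (nhds 0) := by
  have h1 : Tendsto (fun d : ℝ => -d/σ) atBot atTop := by
    apply Tendsto.atTop_div_const hσ
    exact tendsto_neg_atBot_atTop
  have h2 := tendsto_stdNormCDF_atTop.comp h1
  have h3 : Tendsto (fun d => 1 - stdNormCDF (-d/σ)) atBot (nhds (1 - 1)) :=
    tendsto_const_nhds.sub h2
  unfold pOf
  simpa using h3


lemma phiPlus_eq (K : ℕ) (σ d : ℝ) : phiPlus K σ d = Bfun K (pOf σ d) := rfl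

lemma phiMinus_eq (K N : ℕ) (hK : K = 2*N+1) (σ d : ℝ) :
    phiMinus K σ d = 1 - Bfun K (pOf σ d) := by
  have hrange : (K-1)/2 = N := by omega
  have := sum_split K N hK (pOf σ d)
  unfold phiMinus Bfun
  rw [hrange]
  linarith [this]

lemma hFun_eq (K N : ℕ) (hK : K = 2*N+1) (σ d : ℝ) :
    phiPlus K σ d - phiMinus K σ d = 2 * Bfun K (pOf σ d) - 1 := by
  rw [phiPlus_eq, phiMinus_eq K N hK]
  ring


theorem ultimate_bound_exists (K : ℕ) (hK : Odd K) (σ : ℝ) (hσ : 0 < σ) :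
    (∀ d : ℝ, 0 ≤ gFun K σ d) ∧
    (∀ d : ℝ, gFun K σ d = 0 ↔ d = 0) ∧
    MonotoneOn (gFun K σ) (Set.Ici 0) ∧
    AntitoneOn (gFun K σ) (Set.Iic 0) ∧
    Tendsto (fun d => phiPlus K σ d - phiMinus K σ d) atTop (nhds 1) ∧
    Tendsto (fun d => phiPlus K σ d - phiMinus K σ d) atBot (nhds (-1)) ∧
    Tendsto (gFun K σ) atTop atTop ∧
    Tendsto (gFun K σ) atBot atTop ∧
    (∀ c : ℝ, 0 < c → ∃ γ : ℝ, 0 < γ ∧ ∀ d : ℝ, γ < |d| → c < gFun K σ d) := by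
  obtain ⟨N, hN⟩ := hK
  have hK2 : K = 2*N+1 := by omega
  set h : ℝ → ℝ := fun d => phiPlus K σ d - phiMinus K σ d with hh
  have hBmono := Bfun_strictMonoOn K N hK2
  have hpm := pOf_strictMono (σ := σ) hσ
  -- h is strictly monotone
  have hmono : StrictMono h := by
    intro a b hab
    simp only [hh, hFun_eq K N hK2]
    have := hBmono (pOf_mem σ a) (pOf_mem σ b) (hpm hab)
    linarith
  have h0 : h 0 = 0 := by
    simp only [hh, hFun_eq K N hK2, pOf_zero, Bfun_half K N hK2]
    norm_num
  have hnonneg : ∀ d : ℝ, 0 ≤ d → 0 ≤ h d := by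
    intro d hd
    rcases eq_or_lt_of_le hd with rfl | hd'
    · exact le_of_eq h0.symm
    · exact le_of_lt (h0 ▸ hmono hd')
  have hnonpos : ∀ d : ℝ, d ≤ 0 → h d ≤ 0 := by
    intro d hd
    rcases eq_or_lt_of_le hd with rfl | hd'
    · exact le_of_eq h0
    · exact le_of_lt (h0 ▸ hmono hd')
  have hgnn : ∀ d : ℝ, 0 ≤ gFun K σ d := by
    intro d
    rcases le_total 0 d with hd | hd
    · exact mul_nonneg (hnonneg d hd) hd
    · show (0:ℝ) ≤ h d * d
      nlinarith [hnonpos d hd]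
  -- limits of h
  have htop : Tendsto h atTop (nhds 1) := by
    have hc : ContinuousAt (Bfun K) 1 := (Bfun_continuous K N hK2).continuousAt
    have := hc.tendsto.comp (pOf_tendsto_atTop (σ := σ) hσ)
    rw [Bfun_one K N hK2] at this
    have h2 : Tendsto (fun d => 2 * Bfun K (pOf σ d) - 1) atTop (nhds (2*1-1)) :=
      ((this.const_mul 2).sub tendsto_const_nhds)
    simp only [hh]
    have heq : (fun d => phiPlus K σ d - phiMinus K σ d)
        = fun d => 2 * Bfun K (pOf σ d) - 1 := funext fun d => hFun_eq K N hK2 σ d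
    rw [heq]
    have : (2*1-1 : ℝ) = 1 := by norm_num
    rwa [this] at h2
  have hbot : Tendsto h atBot (nhds (-1)) := by
    have hc : ContinuousAt (Bfun K) 0 := (Bfun_continuous K N hK2).continuousAt
    have := hc.tendsto.comp (pOf_tendsto_atBot (σ := σ) hσ)
    rw [Bfun_zero K N hK2] at this
    have h2 : Tendsto (fun d => 2 * Bfun K (pOf σ d) - 1) atBot (nhds (2*0-1)) :=
      ((this.const_mul 2).sub tendsto_const_nhds)
    simp only [hh]
    have heq : (fun d => phiPlus K σ d - phiMinus K σ d)
        = fun d => 2 * Bfun K (pOf σ d) - 1 := funext fun d => hFun_eq K N hK2 σ d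
    rw [heq]
    have : (2*0-1 : ℝ) = -1 := by norm_num
    rwa [this] at h2
  have hgtop : Tendsto (gFun K σ) atTop atTop := by
    have : Tendsto (fun d : ℝ => h d * d) atTop atTop :=
      Tendsto.pos_mul_atTop one_pos htop tendsto_id
    exact this
  have hgbot : Tendsto (gFun K σ) atBot atTop := by
    have : Tendsto (fun d : ℝ => h d * d) atBot atTop :=
      Tendsto.neg_mul_atBot (by norm_num : (-1:ℝ) < 0) hbot tendsto_id
    exact this
  refine ⟨hgnn, ?_, ?_, ?_, htop, hbot, hgtop, hgbot, ?_⟩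
  · -- zero iff
    intro d
    constructor
    · intro hg
      by_contra hd
      rcases lt_or_gt_of_ne hd with hd' | hd'
      · have h1 : h d < 0 := h0 ▸ hmono hd'
        have : 0 < gFun K σ d := mul_pos_of_neg_of_neg h1 hd'
        exact absurd hg this.ne'
      · have h1 : 0 < h d := h0 ▸ hmono hd'
        have : 0 < gFun K σ d := mul_pos h1 hd'
        exact absurd hg this.ne'
    · rintro rfl
      simp [gFun]
  · -- MonotoneOn Ici 0
    intro a ha b hb hab
    simp only [Set.mem_Ici] at ha hb
    have := hmono.monotone hab
    exact mul_le_mul this hab ha (hnonneg b hb)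
  · -- AntitoneOn Iic 0
    intro a ha b hb hab
    simp only [Set.mem_Iic] at ha hb
    have h1 := hmono.monotone hab
    have h2 := hnonpos a ha
    have h3 := hnonpos b hb
    show h b * b ≤ h a * a
    nlinarith
  · -- ultimate bound
    intro c hc
    obtain ⟨A, hA⟩ := (tendsto_atTop.mp hgtop (c+1)).exists_forall_of_atTop
    obtain ⟨B, hB⟩ := (tendsto_atTop.mp hgbot (c+1)).exists_forall_of_atBot
    refine ⟨max (max |A| |B|) 1, by positivity, ?_⟩
    intro d hd
    set γ := max (max |A| |B|) 1 with hγ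
    rcases le_total 0 d with hd0 | hd0
    · rw [abs_of_nonneg hd0] at hd
      have : A ≤ d := by
        have h1 : |A| ≤ γ := le_trans (le_max_left _ _) (le_max_left _ _)
        have := neg_abs_le A
        linarith [le_abs_self A]
      have := hA d this
      linarith
    · rw [abs_of_nonpos hd0] at hd
      have : d ≤ B := by
        have h1 : |B| ≤ γ := le_trans (le_max_right _ _) (le_max_left _ _)
        linarith [neg_abs_le B]
      have := hB d this
      linarith
end
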